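/- Let ℓ be a nonnegative integer and z a complex number with |z| ≤ 1. Then J_ℓ(2z) = (z^ℓ/ℓ!)·e^{−z²/(ℓ+1)}·(1 + O(|z|⁴)), with an absolute implied constant; more precisely, |J_ℓ(2z)·(ℓ!/z^ℓ)·e^{z²/(ℓ+1)} − 1| ≤ C·|z|⁴ for z ≠ 0 and an absolute constant C, and the identity holds trivially at z = 0. -/

import Mathlib

/-- Bessel function of the first kind of order ℓ (complex argument), defined by its
    power series J_ℓ(z) = ∑_{j=0}^∞ (−1)^j/(j!(ℓ+j)!)·(z/2)^{2j+ℓ}. -/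
noncomputable def besselJ (ℓ : ℕ) (z : ℂ) : ℂ :=
  ∑' j : ℕ, ((-1) ^ j / ((j.factorial : ℂ) * ((ℓ + j).factorial : ℂ))) * (z / 2) ^ (2 * j + ℓ)

/-!
With `w = z²`, both `J_ℓ(2z)·ℓ!/z^ℓ` and `e^{w/(ℓ+1)}` are power series in `w` whose `j`-th
coefficients are bounded by `1/j!`, so the `n`-th coefficient of their product is bounded by
`∑_{i+j=n} 1/(i! j!) = 2^n/n!`. The constant coefficient of the product is `1`, and the exponent
`1/(ℓ+1)` is exactly the one that cancels the linear coefficient `-1/(ℓ+1)` of the Bessel series.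
Hence for `|w| ≤ 1` the product differs from `1` by at most `(∑ 2^n/n!)·|w|² = e²·|z|⁴`.
-/

open Finset Nat

theorem sum_antidiagonal_inv_factorial_mul_factorial (n : ℕ) :
    ∑ p ∈ antidiagonal n, ((p.1 ! : ℝ) * p.2 !)⁻¹ = 2 ^ n / n ! := by
  rw [eq_div_iff (by positivity), sum_mul, show (2 : ℝ) = 1 + 1 by norm_num,
    (Commute.one_right (1 : ℝ)).add_pow']
  refine sum_congr rfl fun p hp => ?_
  rw [← mem_antidiagonal.mp hp, nsmul_eq_mul, cast_add_choose]
  simp [div_eq_inv_mul]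

section PowerSeries

variable {𝕜 : Type*} [NormedField 𝕜]

theorem summable_norm_mul_pow_of_norm_le_inv_factorial {a : ℕ → 𝕜}
    (ha : ∀ n, ‖a n‖ ≤ (n ! : ℝ)⁻¹) (w : 𝕜) : Summable fun n => ‖a n * w ^ n‖ := by
  refine (Real.summable_pow_div_factorial ‖w‖).of_nonneg_of_le (fun _ => norm_nonneg _)
    fun n => ?_
  rw [norm_mul, norm_pow, div_eq_inv_mul]
  gcongr
  exact ha n

theorem tsum_mul_pow_mul_tsum_mul_pow [CompleteSpace 𝕜] {a b : ℕ → 𝕜}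
    (ha : ∀ n, ‖a n‖ ≤ (n ! : ℝ)⁻¹) (hb : ∀ n, ‖b n‖ ≤ (n ! : ℝ)⁻¹) (w : 𝕜) :
    (∑' n, a n * w ^ n) * (∑' n, b n * w ^ n) =
      ∑' n, (∑ p ∈ antidiagonal n, a p.1 * b p.2) * w ^ n := by
  rw [tsum_mul_tsum_eq_tsum_sum_antidiagonal_of_summable_norm
    (summable_norm_mul_pow_of_norm_le_inv_factorial ha w)
    (summable_norm_mul_pow_of_norm_le_inv_factorial hb w)]
  refine tsum_congr fun n => ?_
  rw [sum_mul]
  refine sum_congr rfl fun p hp => ?_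
  rw [← mem_antidiagonal.mp hp, pow_add]
  ring

theorem norm_sum_antidiagonal_mul_le {a b : ℕ → 𝕜}
    (ha : ∀ n, ‖a n‖ ≤ (n ! : ℝ)⁻¹) (hb : ∀ n, ‖b n‖ ≤ (n ! : ℝ)⁻¹) (n : ℕ) :
    ‖∑ p ∈ antidiagonal n, a p.1 * b p.2‖ ≤ 2 ^ n / n ! := by
  rw [← sum_antidiagonal_inv_factorial_mul_factorial]
  refine (norm_sum_le _ _).trans (sum_le_sum fun p _ => ?_)
  rw [norm_mul, mul_inv]
  exact mul_le_mul (ha _) (hb _) (norm_nonneg _) (by positivity)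

theorem norm_tsum_mul_pow_sub_one_le [CompleteSpace 𝕜] {c : ℕ → 𝕜} {B : ℕ → ℝ}
    (hB : Summable B) (hcB : ∀ n, ‖c n‖ ≤ B n) (hc₀ : c 0 = 1) (hc₁ : c 1 = 0)
    {w : 𝕜} (hw : ‖w‖ ≤ 1) :
    ‖∑' n, c n * w ^ n - 1‖ ≤ (∑' n, B n) * ‖w‖ ^ 2 := by
  have hB₀ : ∀ n, 0 ≤ B n := fun n => (norm_nonneg _).trans (hcB n)
  have hterm : ∀ n m, ‖c n * w ^ m‖ ≤ B n := fun n m => by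
    rw [norm_mul, norm_pow]
    exact (mul_le_of_le_one_right (norm_nonneg _) (pow_le_one₀ (norm_nonneg _) hw)).trans (hcB n)
  have hsum : Summable fun n => c n * w ^ n :=
    (hB.of_nonneg_of_le (fun _ => norm_nonneg _) fun n => hterm n n).of_norm
  have htail : ∑' n, c n * w ^ n - 1 = w ^ 2 * ∑' n, c (n + 2) * w ^ n := by
    rw [hsum.tsum_eq_zero_add, ((summable_nat_add_iff 1).mpr hsum).tsum_eq_zero_add,
      ← tsum_mul_left]
    simp only [hc₀, hc₁, pow_add]
    ring_nf
  have hB₂ : Summable fun n => B (n + 2) := (summable_nat_add_iff 2).mpr hB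
  have hnorm_tail : ‖∑' n, c (n + 2) * w ^ n‖ ≤ ∑' n, B n :=
    calc ‖∑' n, c (n + 2) * w ^ n‖ ≤ ∑' n, B (n + 2) :=
          tsum_of_norm_bounded hB₂.hasSum fun n => hterm (n + 2) n
      _ ≤ ∑' n, B n := by
          rw [← hB.sum_add_tsum_nat_add 2]
          exact le_add_of_nonneg_left (sum_nonneg fun n _ => hB₀ n)
  rw [htail, norm_mul, norm_pow, mul_comm]
  gcongr

end PowerSeries

theorem Complex.exp_mul_eq_tsum (c w : ℂ) :
    Complex.exp (c * w) = ∑' n, c ^ n / n ! * w ^ n := by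
  rw [Complex.exp_eq_exp_ℂ, NormedSpace.exp_eq_tsum_div]
  simp_rw [mul_pow, div_mul_eq_mul_div]

theorem Real.tsum_pow_div_factorial (x : ℝ) : ∑' n, x ^ n / n ! = Real.exp x := by
  rw [Real.exp_eq_exp_ℝ, NormedSpace.exp_eq_tsum_div]

noncomputable def besselJCoeff (ℓ j : ℕ) : ℂ := (-1) ^ j * ℓ ! / (j ! * (ℓ + j)!)

theorem norm_besselJCoeff_le (ℓ j : ℕ) : ‖besselJCoeff ℓ j‖ ≤ (j ! : ℝ)⁻¹ := by
  have hℓ : (ℓ ! : ℝ) ≤ (ℓ + j)! := by exact_mod_cast factorial_le (le_add_right ℓ j)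
  rw [besselJCoeff, norm_div, norm_mul, norm_mul, norm_pow, norm_neg, norm_one, one_pow, one_mul]
  simp only [Complex.norm_natCast]
  rwa [div_le_iff₀ (by positivity), inv_mul_cancel_left₀ (by positivity)]

theorem besselJ_two_mul_mul_factorial_div_pow (ℓ : ℕ) {z : ℂ} (hz : z ≠ 0) :
    besselJ ℓ (2 * z) * (ℓ ! / z ^ ℓ) = ∑' j, besselJCoeff ℓ j * (z ^ 2) ^ j := by
  rw [besselJ, ← tsum_mul_right]
  refine tsum_congr fun j => ?_
  rw [besselJCoeff, mul_div_cancel_left₀ z two_ne_zero, pow_add, ← pow_mul]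
  field_simp

theorem besselJ_apply_zero (ℓ : ℕ) : besselJ ℓ 0 = 0 ^ ℓ / ℓ ! := by
  rw [besselJ, tsum_eq_single 0 fun j hj => by simp [hj]]
  simp [div_eq_inv_mul]

theorem norm_inv_succ_pow_div_factorial_le (ℓ k : ℕ) :
    ‖((ℓ : ℂ) + 1)⁻¹ ^ k / (k ! : ℂ)‖ ≤ (k ! : ℝ)⁻¹ := by
  have hℓ : ‖((ℓ : ℂ) + 1)⁻¹‖ ≤ 1 := by
    rw [norm_inv]
    exact inv_le_one_of_one_le₀ (by exact_mod_cast (le_add_left 1 ℓ : 1 ≤ ℓ + 1))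
  rw [norm_div, norm_pow, Complex.norm_natCast, div_eq_mul_inv]
  exact mul_le_of_le_one_left (by positivity) (pow_le_one₀ (norm_nonneg _) hℓ)

theorem sum_antidiagonal_besselJCoeff_mul_zero (ℓ : ℕ) :
    ∑ p ∈ antidiagonal 0, besselJCoeff ℓ p.1 * (((ℓ : ℂ) + 1)⁻¹ ^ p.2 / (p.2 ! : ℂ)) = 1 := by
  simp [besselJCoeff, factorial_ne_zero]

theorem sum_antidiagonal_besselJCoeff_mul_one (ℓ : ℕ) :
    ∑ p ∈ antidiagonal 1, besselJCoeff ℓ p.1 * (((ℓ : ℂ) + 1)⁻¹ ^ p.2 / (p.2 ! : ℂ)) = 0 := by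
  rw [sum_antidiagonal_succ, antidiagonal_zero, sum_singleton]
  simp only [besselJCoeff, factorial_succ, zero_add, add_zero, factorial_zero]
  push_cast
  field_simp
  ring

/-- For |z| ≤ 1, J_ℓ(2z) = (z^ℓ/ℓ!)·e^{−z²/(ℓ+1)}·(1 + O(|z|⁴)) with an absolute
    implied constant; the identity holds trivially at z = 0. -/
theorem besselJ_two_z_approx :
    (∀ ℓ : ℕ, besselJ ℓ 0 = 0 ^ ℓ / (ℓ.factorial : ℂ)) ∧
    ∃ C : ℝ, 0 < C ∧ ∀ (ℓ : ℕ) (z : ℂ), ‖z‖ ≤ 1 → z ≠ 0 →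
      ‖besselJ ℓ (2 * z) * ((ℓ.factorial : ℂ) / z ^ ℓ)
          * Complex.exp (z ^ 2 / ((ℓ : ℂ) + 1)) - 1‖
        ≤ C * ‖z‖ ^ 4 := by
  refine ⟨besselJ_apply_zero, Real.exp 2, Real.exp_pos 2, fun ℓ z hz hz₀ => ?_⟩
  have hz₂ : ‖z ^ 2‖ ≤ 1 := by rw [norm_pow]; exact pow_le_one₀ (norm_nonneg z) hz
  rw [besselJ_two_mul_mul_factorial_div_pow ℓ hz₀, div_eq_inv_mul (z ^ 2),
    Complex.exp_mul_eq_tsum, tsum_mul_pow_mul_tsum_mul_pow (norm_besselJCoeff_le ℓ)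
      (norm_inv_succ_pow_div_factorial_le ℓ), ← Real.tsum_pow_div_factorial,
    show ‖z‖ ^ 4 = ‖z ^ 2‖ ^ 2 by rw [norm_pow, ← pow_mul]]
  exact norm_tsum_mul_pow_sub_one_le (Real.summable_pow_div_factorial 2)
    (norm_sum_antidiagonal_mul_le (norm_besselJCoeff_le ℓ) (norm_inv_succ_pow_div_factorial_le ℓ))
    (sum_antidiagonal_besselJCoeff_mul_zero ℓ) (sum_antidiagonal_besselJCoeff_mul_one ℓ) hz₂
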